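/- arXiv:2405.02708 — 2 statements merged into one kernel-verified Lean document; each statement's English description precedes it below -/
import Mathlib

section
/- For every n ≥ 2 and every subset A of L: (1) (X, τ(A)) is perfect if and only if the subspace L of (X, τ(A)) is perfect; (2) (X, τ(A)) is Lindelöf if and only if the subspace L of (X, τ(A)) is Lindelöf; (3) (X, τ(A)) is σ-compact if and only if the subspace L of (X, τ(A)) is σ-compact. -/
open Metric Set TopologicalSpace

noncomputable section

/-- The last coordinate `x (n-1)` of a point of `EuclideanSpace ℝ (Fin n)`
(junk value `0` if `n = 0`). -/
def lastCoord (n : ℕ) (x : EuclideanSpace ℝ (Fin n)) : ℝ :=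
  if h : 0 < n then x ⟨n - 1, Nat.sub_lt h one_pos⟩ else 0

/-- The closed upper half-space `X = {x : x (n-1) ≥ 0}`. -/
def HalfSpace (n : ℕ) : Set (EuclideanSpace ℝ (Fin n)) := {x | 0 ≤ lastCoord n x}

/-- The open upper half-space `P = {x : x (n-1) > 0}`. -/
def OpenHalf (n : ℕ) : Set (EuclideanSpace ℝ (Fin n)) := {x | 0 < lastCoord n x}

/-- The boundary hyperplane `L = {x : x (n-1) = 0}`. -/
def Bdry (n : ℕ) : Set (EuclideanSpace ℝ (Fin n)) := {x | lastCoord n x = 0}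

/-- The `n`-th standard basis vector `e` (junk value `0` if `n = 0`). -/
def eVec (n : ℕ) : EuclideanSpace ℝ (Fin n) :=
  if h : 0 < n then EuclideanSpace.single ⟨n - 1, Nat.sub_lt h one_pos⟩ (1 : ℝ) else 0

/-- The tangent ball `B̃(a, ε) = {a} ∪ B(a + ε • e, ε)`. -/
def tangentBall (n : ℕ) (a : EuclideanSpace ℝ (Fin n)) (ε : ℝ) :
    Set (EuclideanSpace ℝ (Fin n)) :=
  {a} ∪ ball (a + ε • eVec n) ε

/-- The generating family for the topology `τ(A)` on `X`:
balls `B(a,ε)` with `a ∈ P`, `0 < ε < a (n-1)`; traces `B(a,ε) ∩ X` with `a ∈ A`, `ε > 0`;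
and tangent balls `B̃(a,ε)` with `a ∈ L \ A`, `ε > 0`. -/
def niemGen (n : ℕ) (A : Set (EuclideanSpace ℝ (Fin n))) : Set (Set (HalfSpace n)) :=
  {s | ∃ a ∈ OpenHalf n, ∃ ε, 0 < ε ∧ ε < lastCoord n a ∧
      s = Subtype.val ⁻¹' ball a ε} ∪
  {s | ∃ a ∈ A, ∃ ε, 0 < ε ∧ s = Subtype.val ⁻¹' ball a ε} ∪
  {s | ∃ a ∈ Bdry n \ A, ∃ ε, 0 < ε ∧ s = Subtype.val ⁻¹' tangentBall n a ε}

/-- The topology `τ(A)` on `X`; `τ(∅)` is the Niemytzki topology `τ_N`. -/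
def tau (n : ℕ) (A : Set (EuclideanSpace ℝ (Fin n))) : TopologicalSpace (HalfSpace n) :=
  generateFrom (niemGen n A)

/-- The inclusion of `L` into `X`. -/
def inclLX (n : ℕ) (x : Bdry n) : HalfSpace n := ⟨x.1, le_of_eq x.2.symm⟩

/-- The subspace topology `τ(A)|_L` on `L` induced from `(X, τ(A))`. -/
def tauL (n : ℕ) (A : Set (EuclideanSpace ℝ (Fin n))) : TopologicalSpace (Bdry n) :=
  TopologicalSpace.induced (inclLX n) (tau n A)

/-- A space is perfect if every closed set is a `Gδ`-set. -/
def IsPerfectSpace (X : Type*) [TopologicalSpace X] : Prop :=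
  ∀ s : Set X, IsClosed s → IsGδ s

/-- An `Fσ`-set: a countable union of closed sets. -/
def IsFsigma {X : Type*} [TopologicalSpace X] (s : Set X) : Prop :=
  ∃ F : ℕ → Set X, (∀ i, IsClosed (F i)) ∧ s = ⋃ i, F i

/-- Countably paracompact: every countable open cover admits a locally finite open refinement. -/
def CountablyParacompact (X : Type*) [TopologicalSpace X] : Prop :=
  ∀ u : ℕ → Set X, (∀ i, IsOpen (u i)) → (⋃ i, u i) = Set.univ →
    ∃ (ι : Type) (v : ι → Set X), (∀ j, IsOpen (v j)) ∧ (⋃ j, v j) = Set.univ ∧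
      LocallyFinite v ∧ ∀ j, ∃ i, v j ⊆ u i

/-- A zero set: the zero locus of a continuous real-valued function. -/
def IsZeroSet {X : Type*} [TopologicalSpace X] (s : Set X) : Prop :=
  ∃ f : X → ℝ, Continuous f ∧ s = f ⁻¹' {0}

/-- `Y` is z-embedded in `X` if every zero set of the subspace `Y`
is the trace on `Y` of a zero set of `X`. -/
def ZEmbedded {X : Type*} [TopologicalSpace X] (Y : Set X) : Prop :=
  ∀ s : Set Y, IsZeroSet s → ∃ Z : Set X, IsZeroSet Z ∧ s = Subtype.val ⁻¹' Z

/-- `Y` is `C*`-embedded in `X` if every bounded continuous real-valued function on the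
subspace `Y` extends to a bounded continuous function on `X`. -/
def CStarEmbedded {X : Type*} [TopologicalSpace X] (Y : Set X) : Prop :=
  ∀ f : Y → ℝ, Continuous f → (∃ M, ∀ y, |f y| ≤ M) →
    ∃ g : X → ℝ, Continuous g ∧ (∃ M, ∀ x, |g x| ≤ M) ∧ ∀ y : Y, g ↑y = f y
end

/-!
The open half `P` is `τ(A)`-open, and on it `τ(A)` is the Euclidean topology: every generator
meets `P` in a Euclidean open set, since a tangent ball `B̃(a, ε)` only adds the point `a ∉ P`.
So `P` is an open subspace that is metrizable and σ-compact, while its complement `L` is closed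
and a `Gδ` (it is Euclidean closed, and `τ(A)` is finer than the Euclidean topology). A closed set
of `X` is the union of its traces on `L` and on `P`, and each trace is `Gδ` in `X` as soon as it is
`Gδ` in the subspace; similarly `X = L ∪ P` is Lindelöf (σ-compact) iff `L` is.
-/

open Topology Filter

section ClosedComplement

variable {X Y : Type*} [TopologicalSpace X] [TopologicalSpace Y] {f : Y → X}

theorem Topology.IsInducing.isGδ_image (hf : IsInducing f) (hr : IsGδ (range f)) {t : Set Y}
    (ht : IsGδ t) : IsGδ (f '' t) := by
  obtain ⟨U, hUo, rfl⟩ := isGδ_iff_eq_iInter_nat.1 ht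
  choose W hWo hWU using fun k => hf.isOpen_iff.1 (hUo k)
  simp_rw [← hWU, ← preimage_iInter, image_preimage_eq_inter_range]
  exact (IsGδ.iInter_of_isOpen hWo).inter hr

theorem IsPerfectSpace.of_isClosedEmbedding (hf : IsClosedEmbedding f) (hX : IsPerfectSpace X) :
    IsPerfectSpace Y := fun s hs => by
  simpa only [preimage_image_eq s hf.injective] using
    (hX _ (hf.isClosedMap s hs)).preimage hf.continuous

theorem isPerfectSpace_iff_of_isClosedEmbedding (hf : IsClosedEmbedding f)
    (hr : IsGδ (range f)) (hU : IsPerfectSpace ↥(range f)ᶜ) :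
    IsPerfectSpace X ↔ IsPerfectSpace Y := by
  refine ⟨IsPerfectSpace.of_isClosedEmbedding hf, fun hY s hs => ?_⟩
  have hL : IsGδ (s ∩ range f) := by
    rw [← image_preimage_eq_inter_range]
    exact hf.isInducing.isGδ_image hr (hY _ (hs.preimage hf.continuous))
  have hP : IsGδ (s ∩ (range f)ᶜ) := by
    rw [inter_comm, ← Subtype.image_preimage_coe]
    refine IsInducing.subtypeVal.isGδ_image ?_ (hU _ (hs.preimage continuous_subtype_val))
    rw [Subtype.range_coe]
    exact hf.isClosed_range.isOpen_compl.isGδ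
  simpa only [inter_union_compl] using hL.union hP

theorem lindelofSpace_iff_of_isClosedEmbedding (hf : IsClosedEmbedding f)
    (hU : IsLindelof (range f)ᶜ) : LindelofSpace X ↔ LindelofSpace Y := by
  refine ⟨fun _ => hf.LindelofSpace, fun _ => ?_⟩
  rw [← isLindelof_univ_iff, ← union_compl_self (range f)]
  exact (isLindelof_range hf.continuous).union hU

theorem IsSigmaCompact.union {s t : Set X} (hs : IsSigmaCompact s) (ht : IsSigmaCompact t) :
    IsSigmaCompact (s ∪ t) := by
  rw [union_eq_iUnion]
  exact isSigmaCompact_iUnion _ (Bool.forall_bool.2 ⟨ht, hs⟩)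

theorem sigmaCompactSpace_iff_of_isClosedEmbedding (hf : IsClosedEmbedding f)
    (hU : IsSigmaCompact (range f)ᶜ) : SigmaCompactSpace X ↔ SigmaCompactSpace Y := by
  refine ⟨fun _ => hf.sigmaCompactSpace, fun _ => ?_⟩
  rw [← isSigmaCompact_univ_iff, ← union_compl_self (range f)]
  exact (isSigmaCompact_range hf.continuous).union hU

end ClosedComplement

theorem continuous_lastCoord {n : ℕ} (hn : 0 < n) : Continuous (lastCoord n) := by
  have : lastCoord n = EuclideanSpace.proj (𝕜 := ℝ) (⟨n - 1, Nat.sub_lt hn one_pos⟩ : Fin n) := by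
    ext x
    simp [lastCoord, hn]
  rw [this]
  exact ContinuousLinearMap.continuous _

theorem tangentBall_subset_ball {n : ℕ} (hn : 0 < n) (a : EuclideanSpace ℝ (Fin n)) {ε : ℝ}
    (hε : 0 < ε) : tangentBall n a ε ⊆ ball a (2 * ε) := by
  refine union_subset (singleton_subset_iff.2 (mem_ball_self (by positivity)))
    (ball_subset_ball' (le_of_eq ?_))
  rw [dist_self_add_left, norm_smul, Real.norm_of_nonneg hε.le]
  simp only [eVec, hn, ↓reduceDIte, PiLp.norm_single, norm_one, mul_one]
  ring

/-- `X` carrying the topology `τ(A)`. -/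
def TauSpace (n : ℕ) (_A : Set (EuclideanSpace ℝ (Fin n))) : Type := HalfSpace n

instance {n : ℕ} {A : Set (EuclideanSpace ℝ (Fin n))} : TopologicalSpace (TauSpace n A) :=
  tau n A

/-- `L` carrying the topology `τ(A)|_L`. -/
def TauBoundary (n : ℕ) (_A : Set (EuclideanSpace ℝ (Fin n))) : Type := Bdry n

instance {n : ℕ} {A : Set (EuclideanSpace ℝ (Fin n))} : TopologicalSpace (TauBoundary n A) :=
  tauL n A

namespace TauSpace

variable {n : ℕ} {A : Set (EuclideanSpace ℝ (Fin n))}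

def toE : TauSpace n A → EuclideanSpace ℝ (Fin n) := Subtype.val

def ofBoundary : TauBoundary n A → TauSpace n A := inclLX n

/-- The open half `P`, as a subset of `(X, τ(A))`. -/
def upper (n : ℕ) (A : Set (EuclideanSpace ℝ (Fin n))) : Set (TauSpace n A) :=
  {x | 0 < lastCoord n (toE x)}

theorem lastCoord_toE_nonneg (x : TauSpace n A) : 0 ≤ lastCoord n (toE x) := x.2

theorem continuous_toE (hn : 0 < n) : Continuous (toE : TauSpace n A → _) := by
  refine continuous_iff_continuousAt.2 fun x => Metric.tendsto_nhds.2 fun δ hδ => ?_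
  obtain ⟨s, hs, hxs, hsub⟩ :
      ∃ s : Set (TauSpace n A), s ∈ niemGen n A ∧ x ∈ s ∧ s ⊆ toE ⁻¹' ball (toE x) δ := by
    by_cases hA : toE x ∈ A
    · exact ⟨_, Or.inl (Or.inr ⟨toE x, hA, δ, hδ, rfl⟩), mem_ball_self hδ, subset_rfl⟩
    rcases (lastCoord_toE_nonneg x).eq_or_lt with h0 | h0
    · refine ⟨_, Or.inr ⟨toE x, ⟨h0.symm, hA⟩, δ / 2, half_pos hδ, rfl⟩, Or.inl rfl,
        preimage_mono ?_⟩
      simpa only [mul_div_cancel₀ δ two_ne_zero] using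
        tangentBall_subset_ball hn (toE x) (half_pos hδ)
    · have hr : 0 < min δ (lastCoord n (toE x)) / 2 := by positivity
      refine ⟨_, Or.inl (Or.inl ⟨toE x, h0, _, hr, ?_, rfl⟩), mem_ball_self hr,
        preimage_mono (ball_subset_ball ?_)⟩
      · linarith [min_le_right δ (lastCoord n (toE x))]
      · linarith [min_le_left δ (lastCoord n (toE x))]
  exact mem_nhds_iff.2 ⟨s, hsub, isOpen_generateFrom_of_mem hs, hxs⟩

theorem nhds_eq_comap_toE (hn : 0 < n) {x : TauSpace n A} (hx : x ∈ upper n A) :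
    𝓝 x = comap toE (𝓝 (toE x)) := by
  refine le_antisymm ((continuous_toE hn).tendsto x).le_comap ?_
  refine tendsto_id'.1 (tendsto_nhds_generateFrom_iff.2 fun s hs hxs => ?_)
  rcases hs with (⟨a, -, ε, -, -, rfl⟩ | ⟨a, -, ε, -, rfl⟩) | ⟨a, ha, ε, -, rfl⟩
  · exact preimage_mem_comap (isOpen_ball.mem_nhds hxs)
  · exact preimage_mem_comap (isOpen_ball.mem_nhds hxs)
  · have hxa : toE x ≠ a := fun h => (show lastCoord n (toE x) ≠ 0 from hx.ne') (h ▸ ha.1)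
    exact mem_of_superset (preimage_mem_comap (isOpen_ball.mem_nhds (hxs.resolve_left hxa)))
      (preimage_mono subset_union_right)

theorem isOpenEmbedding_upper (hn : 0 < n) :
    IsOpenEmbedding (fun x : upper n A => toE (x : TauSpace n A)) := by
  refine ⟨⟨isInducing_iff_nhds.2 fun x => ?_,
    Subtype.val_injective.comp Subtype.val_injective⟩, ?_⟩
  · rw [nhds_subtype, nhds_eq_comap_toE hn x.2, comap_comap]
    rfl
  · have : range (fun x : upper n A => toE (x : TauSpace n A)) = OpenHalf n :=
      Subset.antisymm (range_subset_iff.2 fun x => x.2)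
        fun y hy => ⟨⟨⟨y, (show 0 < lastCoord n y from hy).le⟩, hy⟩, rfl⟩
    rw [this]
    exact isOpen_lt continuous_const (continuous_lastCoord hn)

theorem isSigmaCompact_upper (hn : 0 < n) : IsSigmaCompact (upper n A) := by
  have := (isOpenEmbedding_upper (A := A) hn).locallyCompactSpace
  have := (isOpenEmbedding_upper (A := A) hn).isEmbedding.secondCountableTopology
  exact isSigmaCompact_iff_sigmaCompactSpace.2 inferInstance

theorem isPerfectSpace_upper (hn : 0 < n) : IsPerfectSpace (upper n A) := fun _ hs =>
  have := (isOpenEmbedding_upper (A := A) hn).isEmbedding.metrizableSpace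
  hs.isGδ

theorem isGδ_compl_upper (hn : 0 < n) : IsGδ (upper n A)ᶜ := by
  have : (upper n A)ᶜ = toE ⁻¹' {y | lastCoord n y ≤ 0} := by
    ext
    simp [upper]
  rw [this]
  exact (isClosed_le (continuous_lastCoord hn) continuous_const).isGδ.preimage (continuous_toE hn)

theorem range_ofBoundary : range (ofBoundary : TauBoundary n A → _) = (upper n A)ᶜ :=
  Subset.antisymm (range_subset_iff.2 fun x => (show lastCoord n x.1 = 0 from x.2).not_gt)
    fun y hy => ⟨⟨toE y, le_antisymm (not_lt.1 hy) (lastCoord_toE_nonneg y)⟩, rfl⟩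

theorem isClosedEmbedding_ofBoundary (hn : 0 < n) :
    IsClosedEmbedding (ofBoundary : TauBoundary n A → _) := by
  refine ⟨⟨⟨rfl⟩, fun x y h => Subtype.ext (congrArg toE h)⟩, ?_⟩
  rw [range_ofBoundary, isClosed_compl_iff]
  exact isOpen_lt continuous_const ((continuous_lastCoord hn).comp (continuous_toE hn))

end TauSpace

theorem tauA_iff_boundary_general (n : ℕ) (hn : 2 ≤ n)
    (A : Set (EuclideanSpace ℝ (Fin n))) :
    (@IsPerfectSpace (HalfSpace n) (tau n A) ↔ @IsPerfectSpace (Bdry n) (tauL n A)) ∧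
    (@LindelofSpace (HalfSpace n) (tau n A) ↔ @LindelofSpace (Bdry n) (tauL n A)) ∧
    (@SigmaCompactSpace (HalfSpace n) (tau n A) ↔ @SigmaCompactSpace (Bdry n) (tauL n A)) := by
  show (IsPerfectSpace (TauSpace n A) ↔ IsPerfectSpace (TauBoundary n A)) ∧
    (LindelofSpace (TauSpace n A) ↔ LindelofSpace (TauBoundary n A)) ∧
    (SigmaCompactSpace (TauSpace n A) ↔ SigmaCompactSpace (TauBoundary n A))
  have hn0 : 0 < n := by omega
  have hf := TauSpace.isClosedEmbedding_ofBoundary (A := A) hn0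
  have hL := TauSpace.range_ofBoundary (A := A)
  have hP : (range TauSpace.ofBoundary)ᶜ = TauSpace.upper n A := by rw [hL, compl_compl]
  exact ⟨isPerfectSpace_iff_of_isClosedEmbedding hf (hL ▸ TauSpace.isGδ_compl_upper hn0)
      (hP ▸ TauSpace.isPerfectSpace_upper hn0),
    lindelofSpace_iff_of_isClosedEmbedding hf
      (hP ▸ (TauSpace.isSigmaCompact_upper hn0).isLindelof),
    sigmaCompactSpace_iff_of_isClosedEmbedding hf (hP ▸ TauSpace.isSigmaCompact_upper hn0)⟩

/-- For every `n ≥ 2` and `A ⊆ L`: `(X, τ(A))` is perfect (resp. Lindelöf, σ-compact)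
iff the subspace `(L, τ(A)|_L)` is perfect (resp. Lindelöf, σ-compact). -/
theorem tauA_iff_boundary (n : ℕ) (hn : 2 ≤ n)
    (A : Set (EuclideanSpace ℝ (Fin n))) (hA : A ⊆ Bdry n) :
    (@IsPerfectSpace (HalfSpace n) (tau n A) ↔ @IsPerfectSpace (Bdry n) (tauL n A)) ∧
    (@LindelofSpace (HalfSpace n) (tau n A) ↔ @LindelofSpace (Bdry n) (tauL n A)) ∧
    (@SigmaCompactSpace (HalfSpace n) (tau n A) ↔ @SigmaCompactSpace (Bdry n) (tauL n A)) :=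
  tauA_iff_boundary_general n hn A
end

section
/- For every n ≥ 2 and every subset A of L, the subspace (L, τ(A)|_L) is perfect if and only if A is a Gδ-set in L with its Euclidean subspace topology. -/
open Metric Set TopologicalSpace

/-! On `L`, the topology `τ(A)|_L` keeps the Euclidean neighbourhoods of the points of `A` and
makes every other point isolated: a tangent ball meets `L` only in its point of tangency, and a
ball inside `P` misses `L`. In this space `A` is closed, so perfectness gives `A = ⋂ Uᵢ` with each
`Uᵢ` a Euclidean neighbourhood of its points in `A`, and the Euclidean interiors of the `Uᵢ` still
cut out `A`. Conversely, a closed set `s` splits as `(A ∩ cl s) ∪ (s \ A)`: a Euclidean `Gδ`,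
since `L` is metrizable, together with a set of isolated points. -/

open Filter Topology

/-- The space `X_A` of Bennett–Lutzer (the Michael line is `ℝ_ℚ`). -/
def isolateOutside {X : Type*} [TopologicalSpace X] (A : Set X) : TopologicalSpace X where
  IsOpen U := ∀ x ∈ U, x ∈ A → U ∈ 𝓝 x
  isOpen_univ _ _ _ := univ_mem
  isOpen_inter _ _ hU hV x hx hxA := inter_mem (hU x hx.1 hxA) (hV x hx.2 hxA)
  isOpen_sUnion _ hS _ := fun ⟨U, hUS, hxU⟩ hxA =>
    mem_of_superset (hS U hUS _ hxU hxA) (subset_sUnion_of_mem hUS)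

theorem IsGδ.mono {X : Type*} {t₁ t₂ : TopologicalSpace X} {s : Set X} (hs : @IsGδ X t₂ s)
    (h : t₁ ≤ t₂) : @IsGδ X t₁ s := by
  obtain ⟨T, hT, hTc, rfl⟩ := hs
  exact ⟨T, fun u hu => (hT u hu).mono h, hTc, rfl⟩

section isolateOutside

variable {X : Type*} [TopologicalSpace X] {A : Set X}

theorem isolateOutside_le : isolateOutside A ≤ ‹TopologicalSpace X› :=
  fun _ hU _ hx _ => hU.mem_nhds hx

theorem isOpen_isolateOutside_of_disjoint {U : Set X} (h : Disjoint U A) :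
    IsOpen[isolateOutside A] U :=
  fun _ hx hxA => absurd hxA (h.notMem_of_mem_left hx)

theorem isClosed_isolateOutside : IsClosed[isolateOutside A] A :=
  @IsClosed.mk _ (isolateOutside A) _ (isOpen_isolateOutside_of_disjoint disjoint_compl_left)

theorem isGδ_of_isGδ_isolateOutside (h : @IsGδ X (isolateOutside A) A) : IsGδ A := by
  obtain ⟨T, hT, hTc, hA⟩ := h
  refine ⟨interior '' T, forall_mem_image.2 fun U _ => isOpen_interior (s := U), hTc.image _, ?_⟩
  refine Subset.antisymm (fun x hxA => ?_) ?_
  · rintro _ ⟨U, hUT, rfl⟩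
    have hxU : x ∈ U := (hA ▸ hxA : x ∈ ⋂₀ T) U hUT
    exact mem_interior_iff_mem_nhds.2 (hT U hUT x hxU hxA)
  · rw [sInter_image, hA, sInter_eq_biInter]
    exact iInter₂_mono fun _ _ => interior_subset

theorem isPerfectSpace_isolateOutside_iff (hX : IsPerfectSpace X) :
    @IsPerfectSpace X (isolateOutside A) ↔ IsGδ A := by
  refine ⟨fun h => isGδ_of_isGδ_isolateOutside (h A isClosed_isolateOutside), fun hA s hs => ?_⟩
  have hsplit : s = (A ∩ closure s) ∪ (s \ A) := by
    refine Subset.antisymm (fun x hx => ?_) ?_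
    · by_cases hxA : x ∈ A
      exacts [Or.inl ⟨hxA, subset_closure hx⟩, Or.inr ⟨hx, hxA⟩]
    · rintro x (⟨hxA, hxs⟩ | ⟨hx, _⟩)
      · by_contra hxs'
        obtain ⟨y, hys', hys⟩ := mem_closure_iff_nhds.1 hxs _ (hs.1 x hxs' hxA)
        exact hys' hys
      · exact hx
  rw [hsplit]
  exact @IsGδ.union X (isolateOutside A) _ _
    ((hA.inter (hX _ isClosed_closure)).mono isolateOutside_le)
    (@IsOpen.isGδ X (isolateOutside A) _ (isOpen_isolateOutside_of_disjoint disjoint_sdiff_left))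

end isolateOutside

section Bdry

variable {n : ℕ}

theorem lastCoord_eq (hn : 0 < n) (x : EuclideanSpace ℝ (Fin n)) :
    lastCoord n x = x ⟨n - 1, Nat.sub_lt hn one_pos⟩ :=
  dif_pos hn

theorem abs_lastCoord_sub_le_dist (hn : 0 < n) (x y : EuclideanSpace ℝ (Fin n)) :
    |lastCoord n x - lastCoord n y| ≤ dist x y := by
  rw [lastCoord_eq hn, lastCoord_eq hn, dist_eq_norm, ← Real.norm_eq_abs, ← PiLp.sub_apply]
  exact PiLp.norm_apply_le _ _

theorem lastCoord_add_smul_eVec (hn : 0 < n) (a : EuclideanSpace ℝ (Fin n)) (ε : ℝ) :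
    lastCoord n (a + ε • eVec n) = lastCoord n a + ε := by
  simp [lastCoord_eq hn, eVec, hn]

theorem notMem_ball_of_le_lastCoord (hn : 0 < n) {x a : EuclideanSpace ℝ (Fin n)}
    (hx : x ∈ Bdry n) {ε : ℝ} (hε : ε ≤ lastCoord n a) : x ∉ ball a ε := by
  intro hxa
  have h := abs_lastCoord_sub_le_dist hn a x
  rw [hx, sub_zero] at h
  linarith [le_abs_self (lastCoord n a), mem_ball.1 hxa, dist_comm x a]

theorem eq_of_mem_tangentBall (hn : 0 < n) {x a : EuclideanSpace ℝ (Fin n)}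
    (hx : x ∈ Bdry n) (ha : a ∈ Bdry n) {ε : ℝ} (h : x ∈ tangentBall n a ε) : x = a := by
  refine h.resolve_right (notMem_ball_of_le_lastCoord hn hx ?_)
  rw [lastCoord_add_smul_eVec hn, ha, zero_add]

theorem preimage_inclLX_tangentBall (hn : 0 < n) (a : Bdry n) {ε : ℝ} :
    inclLX n ⁻¹' (Subtype.val ⁻¹' tangentBall n a ε) = {a} :=
  Subset.antisymm (fun x hx => Subtype.ext (eq_of_mem_tangentBall hn x.2 a.2 hx))
    (singleton_subset_iff.2 (Or.inl rfl))

theorem preimage_inclLX_ball (a : Bdry n) (ε : ℝ) :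
    inclLX n ⁻¹' (Subtype.val ⁻¹' ball a.1 ε) = ball a ε :=
  rfl

theorem isOpen_tauL_preimage_of_mem_niemGen {A : Set (EuclideanSpace ℝ (Fin n))}
    {s : Set (HalfSpace n)} (hs : s ∈ niemGen n A) : IsOpen[tauL n A] (inclLX n ⁻¹' s) :=
  ⟨s, .basic s hs, rfl⟩

theorem isolateOutside_le_tauL (hn : 0 < n) (A : Set (EuclideanSpace ℝ (Fin n))) :
    isolateOutside (Subtype.val ⁻¹' A : Set (Bdry n)) ≤ tauL n A := by
  rw [tauL, tau, induced_generateFrom_eq, le_generateFrom_iff_subset_isOpen]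
  rintro _ ⟨s, (⟨a, -, ε, -, hεa, rfl⟩ | ⟨a, -, ε, -, rfl⟩) | ⟨a, ⟨haL, haA⟩, ε, -, rfl⟩, rfl⟩
  · exact isOpen_isolateOutside_of_disjoint (Set.disjoint_left.2 fun x hx _ =>
      notMem_ball_of_le_lastCoord hn x.2 hεa.le hx)
  · exact (isOpen_ball.preimage continuous_subtype_val).mono isolateOutside_le
  · rw [preimage_inclLX_tangentBall hn ⟨a, haL⟩]
    exact isOpen_isolateOutside_of_disjoint (disjoint_singleton_left.2 haA)

theorem tauL_le_isolateOutside (hn : 0 < n) (A : Set (EuclideanSpace ℝ (Fin n))) :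
    tauL n A ≤ isolateOutside (Subtype.val ⁻¹' A : Set (Bdry n)) := by
  intro U hU
  refine (@isOpen_iff_forall_mem_open _ (tauL n A) U).2 fun x hx => ?_
  by_cases hxA : x.1 ∈ A
  · obtain ⟨ε, hε, hball⟩ := Metric.mem_nhds_iff.1 (hU x hx hxA)
    rw [← preimage_inclLX_ball] at hball
    exact ⟨_, hball, isOpen_tauL_preimage_of_mem_niemGen (Or.inl (Or.inr ⟨x, hxA, ε, hε, rfl⟩)),
      mem_ball_self (α := EuclideanSpace ℝ (Fin n)) hε⟩
  · refine ⟨{x}, singleton_subset_iff.2 hx, ?_, rfl⟩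
    rw [← preimage_inclLX_tangentBall hn x (ε := 1)]
    exact isOpen_tauL_preimage_of_mem_niemGen (Or.inr ⟨x, ⟨x.2, hxA⟩, 1, one_pos, rfl⟩)

theorem tauL_eq_isolateOutside (hn : 0 < n) (A : Set (EuclideanSpace ℝ (Fin n))) :
    tauL n A = isolateOutside (Subtype.val ⁻¹' A : Set (Bdry n)) :=
  le_antisymm (tauL_le_isolateOutside hn A) (isolateOutside_le_tauL hn A)

end Bdry

theorem tauL_perfect_iff_general (n : ℕ) (hn : 2 ≤ n)
    (A : Set (EuclideanSpace ℝ (Fin n))) :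
    @IsPerfectSpace (Bdry n) (tauL n A) ↔ IsGδ (Subtype.val ⁻¹' A : Set (Bdry n)) := by
  rw [tauL_eq_isolateOutside (by omega)]
  exact isPerfectSpace_isolateOutside_iff fun _ hs => hs.isGδ

/-- For every `n ≥ 2` and `A ⊆ L`, the subspace `(L, τ(A)|_L)` is perfect iff
`A` is a `Gδ`-set in `L` with its Euclidean subspace topology. -/
theorem tauL_perfect_iff (n : ℕ) (hn : 2 ≤ n)
    (A : Set (EuclideanSpace ℝ (Fin n))) (hA : A ⊆ Bdry n) :
    @IsPerfectSpace (Bdry n) (tauL n A) ↔ IsGδ (Subtype.val ⁻¹' A : Set (Bdry n)) :=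
  tauL_perfect_iff_general n hn A
end
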